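/- arXiv:2308.07680 — 2 statements merged into one kernel-verified Lean document; each statement's English description precedes it below -/
import Mathlib

section
/- Let x₁,x₂,x₃,x₄ ∈ ℝ³ be affinely independent (i.e. det[x₂−x₁, x₃−x₁, x₄−x₁] ≠ 0). Fix 1 ≤ i < j ≤ 4 and s ∈ {i,j}, let F_s be the closed triangle spanned by the three vertices xₖ with k ≠ s, and let n_s be a unit normal vector of F_s. Let x be any point of F_s. With lᵢ := xᵢ − x, a fixed β ∈ ℝ³, σᵢ := ⟨β, lᵢ⟩, and ε > 0, the unique solution (j^E,φ) ∈ ℝ³×ℝ³ of D^E(x)·(j^E;φ) = B₂^ε(σⱼ−σᵢ, −σᵢ)·e_{ij} (where e_{ij} is the standard unit vector of ℝ⁶ corresponding to the row (i,j)) satisfies n_s × φ = 0; i.e., the tangential trace of the H(curl) basis function φ^E_{ij} vanishes identically on the facet F_s opposite to either endpoint of the edge E_{ij} (the local H(curl)-conformity property of S¹_{1⁻}). -/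
open Real Matrix

/-!
On the facet `F_s` opposite `x_s`, with vertices `v₀, v₁, v₂`, the rows of `D^E(x)` belonging
to the three edges of `F_s` have zero right-hand side, because `s` is an endpoint of `E_{ij}`.
Write `x = t₀ v₀ + t₁ v₁ + t₂ v₂` in barycentric coordinates and `N = (v₁ - v₀) × (v₂ - v₀)`.
Then `l_a × l_b = ± t_c N` for each edge `{a, b}` with opposite vertex `c`, and
`t₀ l₀ + t₁ l₁ + t₂ l₂ = 0`. This gives four linear equations in `N·j^E / 2` and the
`l_k·φ`. Their determinant is a sum of nonnegative terms, and it is positive because the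
Bernoulli values are positive and some `t_k` is positive. So every `l_k·φ` vanishes, which makes
`φ`, like `n`, orthogonal to the facet, and therefore parallel to `n`.
-/

/-- The 2D Bernoulli function. -/
noncomputable def B2 (ε σ₁ σ₂ : ℝ) : ℝ :=
  ε * (∫ x in (0:ℝ)..1, Real.exp (σ₁ * x / ε)) /
    (2 * ∫ x₂ in (0:ℝ)..1, ∫ x₁ in (0:ℝ)..(1 - x₂),
      Real.exp ((σ₁ * x₁ + σ₂ * x₂) / ε))

/-- The six edges `(s,t)`, `s < t`, of a tetrahedron, in lexicographic order. -/
def edgePair : Fin 6 → Fin 4 × Fin 4 := ![(0,1), (0,2), (0,3), (1,2), (1,3), (2,3)]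

theorem B2_pos {ε : ℝ} (hε : 0 < ε) (σ₁ σ₂ : ℝ) : 0 < B2 ε σ₁ σ₂ := by
  have hnum : 0 < ∫ x in (0:ℝ)..1, Real.exp (σ₁ * x / ε) :=
    intervalIntegral.intervalIntegral_pos_of_pos
      ((by fun_prop : Continuous fun x => Real.exp (σ₁ * x / ε)).intervalIntegrable _ _)
      (fun _ => Real.exp_pos _) one_pos
  have hinner : Continuous fun x₂ : ℝ => ∫ x₁ in (0:ℝ)..(1 - x₂),
      Real.exp ((σ₁ * x₁ + σ₂ * x₂) / ε) :=
    intervalIntegral.continuous_parametric_intervalIntegral_of_continuous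
      (f := fun x₂ x₁ => Real.exp ((σ₁ * x₁ + σ₂ * x₂) / ε)) (by fun_prop) (by fun_prop)
  have hden : 0 < ∫ x₂ in (0:ℝ)..1, ∫ x₁ in (0:ℝ)..(1 - x₂),
      Real.exp ((σ₁ * x₁ + σ₂ * x₂) / ε) := by
    refine intervalIntegral.intervalIntegral_pos_of_pos_on (hinner.intervalIntegrable _ _)
      (fun x₂ hx₂ => ?_) one_pos
    exact intervalIntegral.intervalIntegral_pos_of_pos
      ((by fun_prop : Continuous fun x₁ => Real.exp ((σ₁ * x₁ + σ₂ * x₂) / ε)).intervalIntegrable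
        _ _)
      (fun _ => Real.exp_pos _) (by linarith [hx₂.2])
  unfold B2
  positivity

theorem exists_edgePair_eq {a b : Fin 4} (h : a < b) : ∃ r, edgePair r = (a, b) := by
  revert a b; decide

theorem affineIndependent_iff_linearIndependent_vsub_succ {k V P : Type*} [Ring k]
    [AddCommGroup V] [Module k V] [AddTorsor V P] {n : ℕ} (p : Fin (n + 1) → P) :
    AffineIndependent k p ↔ LinearIndependent k fun i : Fin n => p i.succ -ᵥ p 0 := by
  rw [affineIndependent_iff_linearIndependent_vsub k p 0,
    ← linearIndependent_equiv (finSuccAboveEquiv 0)]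
  congr!

theorem AffineIndependent.cross_sub_ne_zero {v : Fin 3 → Fin 3 → ℝ} (hv : AffineIndependent ℝ v) :
    (v 1 - v 0) ⨯₃ (v 2 - v 0) ≠ 0 := by
  have hvec : ![v 1 - v 0, v 2 - v 0] = fun i : Fin 2 => v i.succ -ᵥ v 0 := by
    ext i : 1
    fin_cases i <;> rfl
  rw [crossProduct_ne_zero_iff_linearIndependent, hvec]
  exact (affineIndependent_iff_linearIndependent_vsub_succ v).mp hv

theorem affineIndependent_of_det_ne_zero {v : Fin 4 → Fin 3 → ℝ}
    (h : (Matrix.of fun i j : Fin 3 => (v j.succ - v 0) i).det ≠ 0) : AffineIndependent ℝ v :=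
  (affineIndependent_iff_linearIndependent_vsub_succ v).mpr
    (linearIndependent_cols_of_det_ne_zero h)

theorem exists_weights_of_mem_convexHull_range {R E ι : Type*} [Field R] [LinearOrder R]
    [IsStrictOrderedRing R] [AddCommGroup E] [Module R E] [Fintype ι] {v : ι → E} {x : E}
    (hx : x ∈ convexHull R (Set.range v)) :
    ∃ t : ι → R, (∀ k, 0 ≤ t k) ∧ ∑ k, t k = 1 ∧ ∑ k, t k • v k = x := by
  classical
  rw [convexHull_range_eq_exists_affineCombination] at hx
  obtain ⟨u, w, hw0, hw1, rfl⟩ := hx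
  have hw1' : ∑ k, (u : Set ι).indicator w k = 1 := by
    simpa [Finset.sum_indicator_subset _ u.subset_univ] using hw1
  refine ⟨(u : Set ι).indicator w, fun k => ?_, hw1', ?_⟩
  · by_cases hk : k ∈ u <;> simp [hk, hw0]
  · rw [Finset.affineCombination_indicator_subset _ _ u.subset_univ,
      Finset.affineCombination_eq_linear_combination _ _ _ hw1']

theorem eq_smul_cross_of_orthogonal {u v w : Fin 3 → ℝ} (huv : u ⨯₃ v ≠ 0)
    (hu : w ⬝ᵥ u = 0) (hv : w ⬝ᵥ v = 0) : ∃ c : ℝ, w = c • (u ⨯₃ v) := by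
  set N := u ⨯₃ v
  have hNw : N ⨯₃ w = 0 := by
    rw [cross_cross_eq_smul_sub_smul, dotProduct_comm u, dotProduct_comm v, hu, hv,
      zero_smul, zero_smul, sub_zero]
  have hNN : N ⬝ᵥ N ≠ 0 := fun h => huv (dotProduct_self_eq_zero.mp h)
  have key := cross_cross_eq_smul_sub_smul' N N w
  rw [hNw, map_zero, eq_comm, sub_eq_zero] at key
  refine ⟨(N ⬝ᵥ w) / (N ⬝ᵥ N), ?_⟩
  rw [div_eq_inv_mul, mul_smul, key, smul_smul, inv_mul_cancel₀ hNN, one_smul]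

theorem cross_eq_zero_of_orthogonal {u v n w : Fin 3 → ℝ} (huv : u ⨯₃ v ≠ 0)
    (hnu : n ⬝ᵥ u = 0) (hnv : n ⬝ᵥ v = 0) (hwu : w ⬝ᵥ u = 0) (hwv : w ⬝ᵥ v = 0) :
    n ⨯₃ w = 0 := by
  obtain ⟨c, rfl⟩ := eq_smul_cross_of_orthogonal huv hnu hnv
  obtain ⟨d, rfl⟩ := eq_smul_cross_of_orthogonal huv hwu hwv
  simp [cross_self]

theorem cross_sub_barycenter {v : Fin 3 → Fin 3 → ℝ} {t : Fin 3 → ℝ} (ht : ∑ k, t k = 1) :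
    let x := ∑ k, t k • v k
    let N := (v 1 - v 0) ⨯₃ (v 2 - v 0)
    (v 0 - x) ⨯₃ (v 1 - x) = t 2 • N ∧ (v 0 - x) ⨯₃ (v 2 - x) = -t 1 • N ∧
      (v 1 - x) ⨯₃ (v 2 - x) = t 0 • N := by
  rw [Fin.sum_univ_three] at ht
  have h0 : t 0 = 1 - t 1 - t 2 := by linarith
  refine ⟨?_, ?_, ?_⟩ <;> ext c <;> fin_cases c <;>
    simp only [cross_apply, Fin.sum_univ_three, h0, Pi.sub_apply, Pi.add_apply, Pi.smul_apply,
      smul_eq_mul, Fin.zero_eta, Fin.mk_one, Fin.reduceFinMk, cons_val] <;> ring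

theorem eq_zero_of_edge_system {K p₀ p₁ p₂ t₀ t₁ t₂ b₀₁ b₁₀ b₀₂ b₂₀ b₁₂ b₂₁ : ℝ}
    (ht₀ : 0 ≤ t₀) (ht₁ : 0 ≤ t₁) (ht₂ : 0 ≤ t₂) (ht : t₀ + t₁ + t₂ = 1)
    (hb₀₁ : 0 < b₀₁) (hb₁₀ : 0 < b₁₀) (hb₀₂ : 0 < b₀₂) (hb₂₀ : 0 < b₂₀)
    (hb₁₂ : 0 < b₁₂) (hb₂₁ : 0 < b₂₁)
    (h₀₁ : t₂ * K - b₀₁ * p₀ + b₁₀ * p₁ = 0)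
    (h₀₂ : -t₁ * K - b₀₂ * p₀ + b₂₀ * p₂ = 0)
    (h₁₂ : t₀ * K - b₁₂ * p₁ + b₂₁ * p₂ = 0)
    (hp : t₀ * p₀ + t₁ * p₁ + t₂ * p₂ = 0) :
    p₀ = 0 ∧ p₁ = 0 ∧ p₂ = 0 := by
  -- `Δ` is the determinant of the system in `(K, p₀, p₁, p₂)`; the multipliers below are cofactors.
  set Δ := t₁ * t₂ * b₀₁ * b₁₂ + t₁ ^ 2 * b₀₁ * b₂₁ + t₀ * t₁ * b₀₁ * b₂₀ + t₂ ^ 2 * b₀₂ * b₁₂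
    + t₁ * t₂ * b₀₂ * b₂₁ + t₀ * t₂ * b₁₀ * b₀₂ + t₀ * t₂ * b₂₀ * b₁₂ + t₀ * t₁ * b₁₀ * b₂₁
    + t₀ ^ 2 * b₁₀ * b₂₀
  have hΔ : Δ ≠ 0 := by
    obtain h | h | h : 0 < t₀ ∨ 0 < t₁ ∨ 0 < t₂ := by
      by_contra! h
      linarith
    all_goals positivity
  refine ⟨(mul_eq_zero.mp (?_ : Δ * p₀ = 0)).resolve_left hΔ,
    (mul_eq_zero.mp (?_ : Δ * p₁ = 0)).resolve_left hΔ,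
    (mul_eq_zero.mp (?_ : Δ * p₂ = 0)).resolve_left hΔ⟩
  · linear_combination (-(t₁ * (t₂ * b₁₂ + t₁ * b₂₁ + t₀ * b₂₀))) * h₀₁
      + (-(t₂ * (t₂ * b₁₂ + t₁ * b₂₁ + t₀ * b₁₀))) * h₀₂ + (-(t₁ * t₂ * (b₁₀ - b₂₀))) * h₁₂
      + (t₂ * b₂₀ * b₁₂ + t₁ * b₁₀ * b₂₁ + t₀ * b₁₀ * b₂₀) * hp
  · linear_combination (t₀ * (t₁ * b₂₁ + t₂ * b₀₂ + t₀ * b₂₀)) * h₀₁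
      + (-(t₀ * t₂ * (b₀₁ - b₂₁))) * h₀₂ + (-(t₂ * (t₂ * b₀₂ + t₀ * b₂₀ + t₁ * b₀₁))) * h₁₂
      + (t₂ * b₀₂ * b₂₁ + t₁ * b₀₁ * b₂₁ + t₀ * b₀₁ * b₂₀) * hp
  · linear_combination (-(t₀ * t₁ * (b₀₂ - b₁₂))) * h₀₁
      + (t₀ * (t₂ * b₁₂ + t₁ * b₀₁ + t₀ * b₁₀)) * h₀₂
      + (t₁ * (t₂ * b₀₂ + t₁ * b₀₁ + t₀ * b₁₀)) * h₁₂
      + (t₂ * b₀₂ * b₁₂ + t₁ * b₀₁ * b₁₂ + t₀ * b₁₀ * b₀₂) * hp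

noncomputable def edgeRow (b : (Fin 3 → ℝ) → (Fin 3 → ℝ) → ℝ) (u v jE φ : Fin 3 → ℝ) : ℝ :=
  (u ⨯₃ v) ⬝ᵥ jE / 2 - b u v * (u ⬝ᵥ φ) + b v u * (v ⬝ᵥ φ)

/-- `D^E(x)` with `l k = x_k - x` and `B₂^ε(σ_s, σ_t) = b (l s) (l t)`; a vector
`p : Fin 6 → ℝ` stands for `(j^E; φ)`. -/
noncomputable def edgeMatrix (l : Fin 4 → Fin 3 → ℝ) (b : (Fin 3 → ℝ) → (Fin 3 → ℝ) → ℝ) :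
    Matrix (Fin 6) (Fin 6) ℝ :=
  Matrix.of fun r c =>
    if h : (c : ℕ) < 3 then
      (l (edgePair r).1 ⨯₃ l (edgePair r).2) ⟨c, h⟩ / 2
    else
      -b (l (edgePair r).1) (l (edgePair r).2) * l (edgePair r).1 (Fin.subNat 3 c (by omega))
        + b (l (edgePair r).2) (l (edgePair r).1) * l (edgePair r).2 (Fin.subNat 3 c (by omega))

theorem edgeMatrix_mulVec_apply (l : Fin 4 → Fin 3 → ℝ) (b : (Fin 3 → ℝ) → (Fin 3 → ℝ) → ℝ)
    (p : Fin 6 → ℝ) (r : Fin 6) :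
    (edgeMatrix l b *ᵥ p) r = edgeRow b (l (edgePair r).1) (l (edgePair r).2)
      (fun c => p (Fin.castAdd 3 c)) (fun c => p (c.addNat 3)) := by
  simp only [mulVec, dotProduct, edgeMatrix, edgeRow, of_apply, dite_mul, Fin.sum_univ_six,
    Fin.sum_univ_three, Fin.isValue, Fin.coe_ofNat_eq_mod, Nat.zero_mod, Nat.one_mod, Nat.reduceMod,
    Nat.ofNat_pos, Nat.one_lt_ofNat, Nat.lt_add_one, Nat.reduceLT, lt_self_iff_false, ↓reduceDIte,
    Fin.zero_eta, Fin.mk_one, Fin.reduceFinMk, Fin.reduceSubNat, Fin.reduceCastAdd,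
    Fin.reduceAddNat]
  ring

theorem edgeRow_eq_zero_of_mulVec_eq (l : Fin 4 → Fin 3 → ℝ) (b : (Fin 3 → ℝ) → (Fin 3 → ℝ) → ℝ)
    {p : Fin 6 → ℝ} {i j k k' : Fin 4} {c : ℝ}
    (hp : edgeMatrix l b *ᵥ p = c • fun r => if edgePair r = (i, j) then 1 else 0)
    (hkk' : k < k') (hne : (k, k') ≠ (i, j)) :
    edgeRow b (l k) (l k') (fun c => p (Fin.castAdd 3 c)) (fun c => p (c.addNat 3)) = 0 := by
  obtain ⟨r, hr⟩ := exists_edgePair_eq hkk'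
  have hrow := congrFun hp r
  rw [Pi.smul_apply, hr, if_neg hne, smul_zero, edgeMatrix_mulVec_apply, hr] at hrow
  exact hrow

theorem AffineIndependent.cross_eq_zero_of_edgeRow_eq_zero {v : Fin 3 → Fin 3 → ℝ}
    (hv : AffineIndependent ℝ v) {t : Fin 3 → ℝ} (ht₀ : ∀ k, 0 ≤ t k) (ht : ∑ k, t k = 1)
    {x n jE φ : Fin 3 → ℝ} (hx : ∑ k, t k • v k = x)
    (hn₁ : n ⬝ᵥ (v 1 - v 0) = 0) (hn₂ : n ⬝ᵥ (v 2 - v 0) = 0)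
    {b : (Fin 3 → ℝ) → (Fin 3 → ℝ) → ℝ} (hb : ∀ u w, 0 < b u w)
    (h₀₁ : edgeRow b (v 0 - x) (v 1 - x) jE φ = 0)
    (h₀₂ : edgeRow b (v 0 - x) (v 2 - x) jE φ = 0)
    (h₁₂ : edgeRow b (v 1 - x) (v 2 - x) jE φ = 0) :
    n ⨯₃ φ = 0 := by
  subst hx
  obtain ⟨c₀₁, c₀₂, c₁₂⟩ := cross_sub_barycenter (v := v) ht
  set x := ∑ k, t k • v k
  have hbary : ∑ k, t k • (v k - x) = 0 := by
    simp [smul_sub, Finset.sum_sub_distrib, ← Finset.sum_smul, ht, x]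
  have hp : t 0 * ((v 0 - x) ⬝ᵥ φ) + t 1 * ((v 1 - x) ⬝ᵥ φ) + t 2 * ((v 2 - x) ⬝ᵥ φ) = 0 := by
    simpa [Fin.sum_univ_three, add_dotProduct, smul_dotProduct] using
      congrArg (· ⬝ᵥ φ) hbary
  unfold edgeRow at h₀₁ h₀₂ h₁₂
  rw [c₀₁, smul_dotProduct, smul_eq_mul, mul_div_assoc] at h₀₁
  rw [c₀₂, smul_dotProduct, smul_eq_mul, mul_div_assoc] at h₀₂
  rw [c₁₂, smul_dotProduct, smul_eq_mul, mul_div_assoc] at h₁₂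
  obtain ⟨hp₀, hp₁, hp₂⟩ := eq_zero_of_edge_system (ht₀ 0) (ht₀ 1) (ht₀ 2)
    (by rwa [Fin.sum_univ_three] at ht) (hb _ _) (hb _ _) (hb _ _) (hb _ _) (hb _ _) (hb _ _)
    h₀₁ h₀₂ h₁₂ hp
  have hφ : ∀ k, φ ⬝ᵥ (v k - v 0) = 0 := fun k => by
    rw [← sub_sub_sub_cancel_right (v k) (v 0) x, dotProduct_comm, sub_dotProduct, hp₀, sub_zero]
    fin_cases k <;> assumption
  exact cross_eq_zero_of_orthogonal hv.cross_sub_ne_zero hn₁ hn₂ (hφ 1) (hφ 2)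

/-- **Local H(curl)-conformity of `S¹_{1⁻}`.**
Fix an edge `E_{ij}` (`i < j`) and `s ∈ {i, j}`, let `F_s` be the facet opposite
to vertex `x_s` and `n_s` a unit normal of `F_s`. For any `x ∈ F_s`, every
solution `(j^E;φ)` of `D^E(x)·(j^E;φ) = B₂^ε(σⱼ−σᵢ, −σᵢ)·e_{ij}` satisfies
`n_s × φ = 0`: the tangential trace of `φ^E_{ij}` vanishes on the facets
opposite to either endpoint of the edge `E_{ij}`. -/
theorem L1_spline_conformity
    (xv : Fin 4 → (Fin 3 → ℝ))
    (hx : Matrix.det (Matrix.of fun i j : Fin 3 => (xv j.succ - xv 0) i) ≠ 0)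
    (i j s : Fin 4) (hs : s = i ∨ s = j)
    (x : Fin 3 → ℝ)
    (hxF : x ∈ convexHull ℝ (xv '' {k | k ≠ s}))
    (n : Fin 3 → ℝ)
    (hn : ∀ k k' : Fin 4, k ≠ s → k' ≠ s → n ⬝ᵥ (xv k - xv k') = 0)
    (β : Fin 3 → ℝ) (ε : ℝ) (hε : 0 < ε) :
    let l : Fin 4 → (Fin 3 → ℝ) := fun k => xv k - x
    let σ : Fin 4 → ℝ := fun k => β ⬝ᵥ l k
    let DE : Matrix (Fin 6) (Fin 6) ℝ :=
      Matrix.of fun r c =>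
        if h : (c : ℕ) < 3 then
          (l (edgePair r).1 ⨯₃ l (edgePair r).2) ⟨c, h⟩ / 2
        else
          -B2 ε (σ (edgePair r).1) (σ (edgePair r).2) *
              l (edgePair r).1 ⟨(c : ℕ) - 3, by omega⟩
            + B2 ε (σ (edgePair r).2) (σ (edgePair r).1) *
              l (edgePair r).2 ⟨(c : ℕ) - 3, by omega⟩
    ∀ p : Fin 6 → ℝ,
      DE.mulVec p =
        B2 ε (σ j - σ i) (-σ i) •
          (fun r : Fin 6 => if edgePair r = (i, j) then (1 : ℝ) else 0) →
      n ⨯₃ (fun c : Fin 3 => p ⟨(c : ℕ) + 3, by omega⟩) = 0 := by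
  intro l σ DE p hp
  set b : (Fin 3 → ℝ) → (Fin 3 → ℝ) → ℝ := fun u w => B2 ε (β ⬝ᵥ u) (β ⬝ᵥ w)
  set v := xv ∘ s.succAbove
  have hv : AffineIndependent ℝ v :=
    (affineIndependent_of_det_ne_zero hx).comp_embedding s.succAboveEmb
  obtain ⟨t, ht₀, ht, htx⟩ := exists_weights_of_mem_convexHull_range (v := v)
    (by rwa [Set.range_comp, Fin.range_succAbove])
  have hedge (k k' : Fin 3) (h : k < k') :=
    edgeRow_eq_zero_of_mulVec_eq l b hp (Fin.strictMono_succAbove s h) <| by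
      rintro ⟨⟩
      exact hs.elim (Fin.succAbove_ne s k).symm (Fin.succAbove_ne s k').symm
  exact hv.cross_eq_zero_of_edgeRow_eq_zero ht₀ ht htx
    (hn _ _ (Fin.succAbove_ne s 1) (Fin.succAbove_ne s 0))
    (hn _ _ (Fin.succAbove_ne s 2) (Fin.succAbove_ne s 0)) (fun _ _ => B2_pos hε _ _)
    (hedge 0 1 (by decide)) (hedge 0 2 (by decide)) (hedge 1 2 (by decide))
end

section
/- For every ε > 0, all a, b ≥ 0 and every c ∈ ℝ, the 2D Bernoulli function satisfies the splitting identity a·B₂^ε(−ac, bc) + b·B₂^ε(bc, −ac) = (a+b)·B₂^ε((a+b)c, ac). (Geometrically: for a point x on the edge E_{st} dividing it into pieces of lengths a = |l_s| and b = |l_t|, one has B₂^ε(σ_s,σ_t)|l_s| + B₂^ε(σ_t,σ_s)|l_t| = |E_{st}|·B₂^ε(σ_{st}, −σ_s), the identity used to prove the edge degrees of freedom of S¹_{1⁻}(T).) -/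
open Real

/-!
Write `B₂^ε(σ₁, σ₂) = ε N(σ₁) / (2 D(σ₁, σ₂))`. The reflection `x ↦ 1 - x` of `[0, 1]` gives
`N(-σ) = e^{-σ/ε} N(σ)`, and the reflection `x ↦ 1 - y - x` of the triangle, together with its
symmetry under `(x, y) ↦ (y, x)` (Fubini), gives
`D(-σ₁, σ₂) = D(σ₂, -σ₁) = e^{-σ₁/ε} D(σ₁ + σ₂, σ₁)`. With `σ₁ = ac`, `σ₂ = bc` both terms on the
left thus share the denominator `D((a+b)c, ac)` of the right-hand side, and the numerators add up
because `∫₀^{a+b} e^{cy/ε} dy` splits at `a`.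
-/

open MeasureTheory Set Function

section Triangle

variable {E : Type*} [NormedAddCommGroup E] [NormedSpace ℝ E]

def unitTriangle : Set (ℝ × ℝ) := {p | 0 < p.1 ∧ 0 < p.2 ∧ p.1 + p.2 ≤ 1}

lemma measurableSet_unitTriangle : MeasurableSet unitTriangle :=
  (measurableSet_lt measurable_const measurable_fst).inter
    ((measurableSet_lt measurable_const measurable_snd).inter
      (measurableSet_le (measurable_fst.add measurable_snd) measurable_const))

lemma preimage_swap_unitTriangle : Prod.swap ⁻¹' unitTriangle = unitTriangle := by
  ext ⟨x, y⟩
  simp only [unitTriangle, mem_preimage, Prod.fst_swap, Prod.snd_swap, mem_ofPred_eq]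
  constructor <;> rintro ⟨h₁, h₂, h₃⟩ <;> exact ⟨h₂, h₁, by linarith⟩

lemma unitTriangle_subset_Icc : unitTriangle ⊆ Icc (0, 0) (1, 1) := by
  rintro ⟨x, y⟩ ⟨hx, hy, hxy⟩
  exact ⟨⟨hx.le, hy.le⟩, ⟨by simp only; linarith, by simp only; linarith⟩⟩

lemma intervalIntegral_triangle_eq_integral_indicator (f : ℝ → ℝ → E) :
    ∫ y in (0:ℝ)..1, ∫ x in (0:ℝ)..(1 - y), f x y
      = ∫ y, ∫ x, unitTriangle.indicator (uncurry f) (x, y) := by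
  have houter : ∀ y ∉ Ioc (0:ℝ) 1, ∫ x, unitTriangle.indicator (uncurry f) (x, y) = 0 := by
    intro y hy
    refine integral_eq_zero_of_ae (.of_forall fun x => indicator_of_notMem (fun h => ?_) _)
    exact hy ⟨h.2.1, by linarith [h.1, h.2.2]⟩
  rw [← setIntegral_eq_integral_of_forall_compl_eq_zero houter,
    intervalIntegral.integral_of_le zero_le_one]
  refine setIntegral_congr_fun measurableSet_Ioc fun y ⟨hy₀, hy₁⟩ => ?_
  rw [intervalIntegral.integral_of_le (by linarith), ← integral_indicator measurableSet_Ioc]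
  congr 1 with x
  simp only [indicator_apply, unitTriangle, mem_Ioc, mem_ofPred_eq, uncurry_apply_pair]
  congr 1
  exact propext ⟨fun ⟨hx, hxy⟩ => ⟨hx, hy₀, by linarith⟩, fun ⟨hx, _, hxy⟩ => ⟨hx, by linarith⟩⟩

lemma intervalIntegral_triangle_comm [CompleteSpace E] {f : ℝ → ℝ → E}
    (hf : Continuous (uncurry f)) :
    ∫ y in (0:ℝ)..1, ∫ x in (0:ℝ)..(1 - y), f x y
      = ∫ y in (0:ℝ)..1, ∫ x in (0:ℝ)..(1 - y), f y x := by
  have hint : Integrable (unitTriangle.indicator (uncurry f)) (volume.prod volume) := by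
    rw [integrable_indicator_iff measurableSet_unitTriangle, ← Measure.volume_eq_prod]
    exact (hf.continuousOn.integrableOn_compact isCompact_Icc).mono_set unitTriangle_subset_Icc
  have hflip : ∀ x y, unitTriangle.indicator (uncurry fun x y => f y x) (x, y)
      = unitTriangle.indicator (uncurry f) (y, x) := fun x y => by
    have h := indicator_comp_right (s := unitTriangle) (g := uncurry f) (x := (x, y)) Prod.swap
    rwa [preimage_swap_unitTriangle] at h
  simp only [intervalIntegral_triangle_eq_integral_indicator, hflip]
  exact (integral_integral_swap (f := fun x y => unitTriangle.indicator (uncurry f) (x, y))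
    hint).symm

lemma intervalIntegral_triangle_reflect (f : ℝ → ℝ → E) :
    ∫ y in (0:ℝ)..1, ∫ x in (0:ℝ)..(1 - y), f x y
      = ∫ y in (0:ℝ)..1, ∫ x in (0:ℝ)..(1 - y), f (1 - y - x) y := by
  congr 1 with y
  rw [intervalIntegral.integral_comp_sub_left (fun x => f x y), sub_self, sub_zero]

end Triangle

lemma intervalIntegral_unit_split {g : ℝ → ℝ} (hg : Continuous g) (a b : ℝ) :
    a * (∫ x in (0:ℝ)..1, g (a * x)) + b * ∫ x in (0:ℝ)..1, g (b * x + a)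
      = (a + b) * ∫ x in (0:ℝ)..1, g ((a + b) * x) := by
  have hscale : ∀ t, t * ∫ x in (0:ℝ)..1, g (t * x) = ∫ x in (0:ℝ)..t, g x := fun t => by
    rw [← smul_eq_mul, intervalIntegral.smul_integral_comp_mul_left, mul_zero, mul_one]
  have hshift : b * ∫ x in (0:ℝ)..1, g (b * x + a) = ∫ x in a..a + b, g x := by
    rw [← smul_eq_mul, intervalIntegral.smul_integral_comp_mul_add, mul_zero, mul_one, zero_add,
      add_comm b]
  rw [hscale a, hscale (a + b), hshift]
  exact intervalIntegral.integral_add_adjacent_intervals (hg.intervalIntegrable _ _)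
    (hg.intervalIntegrable _ _)

noncomputable def B2num (ε σ : ℝ) : ℝ := ∫ x in (0:ℝ)..1, exp (σ * x / ε)

noncomputable def B2den (ε σ₁ σ₂ : ℝ) : ℝ :=
  ∫ y in (0:ℝ)..1, ∫ x in (0:ℝ)..(1 - y), exp ((σ₁ * x + σ₂ * y) / ε)

lemma B2_eq (ε σ₁ σ₂ : ℝ) : B2 ε σ₁ σ₂ = ε * B2num ε σ₁ / (2 * B2den ε σ₁ σ₂) := rfl

lemma B2num_neg (ε σ : ℝ) : B2num ε (-σ) = exp (-σ / ε) * B2num ε σ := by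
  have hreflect := intervalIntegral.integral_comp_sub_left (fun x => exp (-σ * x / ε))
    (a := 0) (b := 1) 1
  rw [sub_self, sub_zero] at hreflect
  rw [B2num, B2num, ← intervalIntegral.integral_const_mul, ← hreflect]
  congr 1 with x
  rw [← exp_add]
  ring_nf

lemma B2num_split (ε c a b : ℝ) :
    a * B2num ε (a * c) + b * (exp (a * c / ε) * B2num ε (b * c))
      = (a + b) * B2num ε ((a + b) * c) := by
  have hscale : ∀ t, B2num ε (t * c) = ∫ x in (0:ℝ)..1, exp (c * (t * x) / ε) := fun t => by
    rw [B2num]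
    congr 1 with x
    ring_nf
  have hshift :
      exp (a * c / ε) * B2num ε (b * c) = ∫ x in (0:ℝ)..1, exp (c * (b * x + a) / ε) := by
    rw [B2num, ← intervalIntegral.integral_const_mul]
    congr 1 with x
    rw [← exp_add]
    ring_nf
  rw [hshift, hscale, hscale]
  exact intervalIntegral_unit_split (g := fun y => exp (c * y / ε)) (by fun_prop) a b

lemma B2den_comm (ε σ₁ σ₂ : ℝ) : B2den ε σ₁ σ₂ = B2den ε σ₂ σ₁ := by
  rw [B2den, B2den, intervalIntegral_triangle_comm (by fun_prop)]
  simp only [add_comm]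

lemma B2den_neg_left (ε σ₁ σ₂ : ℝ) :
    B2den ε (-σ₁) σ₂ = exp (-σ₁ / ε) * B2den ε σ₁ (σ₁ + σ₂) := by
  rw [B2den, B2den, intervalIntegral_triangle_reflect, ← intervalIntegral.integral_const_mul]
  congr 1 with y
  rw [← intervalIntegral.integral_const_mul]
  congr 1 with x
  rw [← exp_add]
  ring_nf

lemma B2_neg_left (ε σ₁ σ₂ : ℝ) :
    B2 ε (-σ₁) σ₂ = ε * B2num ε σ₁ / (2 * B2den ε (σ₁ + σ₂) σ₁) := by
  rw [B2_eq, B2num_neg, B2den_neg_left, B2den_comm ε σ₁, mul_left_comm ε, mul_left_comm 2,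
    mul_div_mul_left _ _ (exp_ne_zero _)]

lemma B2_neg_right (ε σ₁ σ₂ : ℝ) :
    B2 ε σ₂ (-σ₁) = ε * (exp (σ₁ / ε) * B2num ε σ₂) / (2 * B2den ε (σ₁ + σ₂) σ₁) := by
  rw [B2_eq, B2den_comm, B2den_neg_left, B2den_comm ε σ₁, mul_left_comm ε,
    ← mul_div_mul_left _ _ (exp_ne_zero (σ₁ / ε))]
  congr 1
  rw [neg_div, exp_neg]
  field_simp

theorem B2_splitting_general (ε : ℝ) (a b : ℝ) (c : ℝ) :
    a * B2 ε (-(a * c)) (b * c) + b * B2 ε (b * c) (-(a * c))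
      = (a + b) * B2 ε ((a + b) * c) (a * c) := by
  rw [B2_neg_left, B2_neg_right, B2_eq, show a * c + b * c = (a + b) * c by ring]
  linear_combination ε / (2 * B2den ε ((a + b) * c) (a * c)) * B2num_split ε c a b

/-- **Splitting identity of the 2D Bernoulli function.**
For `ε > 0`, `a, b ≥ 0`, `c ∈ ℝ`:
`a·B₂^ε(−ac, bc) + b·B₂^ε(bc, −ac) = (a+b)·B₂^ε((a+b)c, ac)` —
the identity `B₂^ε(σ_s,σ_t)|l_s| + B₂^ε(σ_t,σ_s)|l_t| = |E_{st}|·B₂^ε(σ_{st},−σ_s)`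
used to prove the edge degrees of freedom of `S¹_{1⁻}(T)`. -/
theorem B2_splitting (ε : ℝ) (hε : 0 < ε) (a b : ℝ) (ha : 0 ≤ a) (hb : 0 ≤ b)
    (c : ℝ) :
    a * B2 ε (-(a * c)) (b * c) + b * B2 ε (b * c) (-(a * c))
      = (a + b) * B2 ε ((a + b) * c) (a * c) :=
  B2_splitting_general ε a b c
end
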